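/- arXiv:1803.03871 — 2 statements merged into one kernel-verified Lean document; each statement's English description precedes it below -/
import Mathlib

section
/- Let k be an algebraically closed field of characteristic 0 and N ≥ 1. Let π : A^1_k × A^N_k → A^1_k be the projection onto the first factor. Let D be a finite subset of A^1(k) and let U be an irreducible closed subvariety of A^1_k × A^N_k such that U ∩ π^{-1}(A^1 \ D) is a vector subbundle of the trivial bundle over A^1 \ D (i.e. each fiber over A^1 \ D is a linear subspace of A^N of constant dimension, varying algebraically, and U is the Zariski closure of this family). Then U is a vector subbundle of the trivial bundle A^1_k × A^N_k over all of A^1. -/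
/-!
Formalization of a statement from "The Dynamical Mordell-Lang Conjecture for
skew-linear self-maps" by D. Ghioca and J. Xie (with an appendix by M. Wibmer).
-/

noncomputable section

namespace DML

open scoped Classical

open Polynomial Filter

/-- `S ⊆ 𝔸^m(k)` is an (affine) algebraic set, i.e. the zero locus of a family of
polynomials; these are the closed sets of the Zariski topology on `𝔸^m`. -/
def IsAlgSet {k : Type*} [Field k] {m : ℕ} (S : Set (Fin m → k)) : Prop :=
  ∃ I : Set (MvPolynomial (Fin m) k),
    S = {x | ∀ p ∈ I, MvPolynomial.eval x p = 0}

/-- The Zariski closure of a subset of affine space. -/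
def zClosure {k : Type*} [Field k] {m : ℕ} (S : Set (Fin m → k)) : Set (Fin m → k) :=
  ⋂₀ {T | IsAlgSet T ∧ S ⊆ T}

/-- `S` is irreducible with respect to the Zariski topology on `𝔸^m`. -/
def IsIrredAlg {k : Type*} [Field k] {m : ℕ} (S : Set (Fin m → k)) : Prop :=
  S.Nonempty ∧ ∀ T₁ T₂ : Set (Fin m → k), IsAlgSet T₁ → IsAlgSet T₂ →
    S ⊆ T₁ ∪ T₂ → (S ⊆ T₁ ∨ S ⊆ T₂)

/-- `S` has (Zariski) dimension at least `d`: there is a strictly increasing chain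
of `d + 1` irreducible closed subsets of `S`. -/
def AffDimGE {k : Type*} [Field k] {m : ℕ} (S : Set (Fin m → k)) (d : ℕ) : Prop :=
  ∃ c : Fin (d + 1) → Set (Fin m → k),
    StrictMono c ∧ ∀ i, IsAlgSet (c i) ∧ IsIrredAlg (c i) ∧ c i ⊆ S

/-- An irreducible (closed) curve in affine space: an irreducible algebraic set of
dimension exactly one. -/
def IsAffineCurve {k : Type*} [Field k] {m : ℕ} (C : Set (Fin m → k)) : Prop :=
  IsAlgSet C ∧ IsIrredAlg C ∧ AffDimGE C 1 ∧ ¬ AffDimGE C 2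

/-- `U ⊆ 𝔸^1 × 𝔸^N` is, over the subset `W ⊆ 𝔸^1`, (the total space of) a rank-`r`
vector subbundle of the trivial bundle: there are `r` algebraic (rational, regular
on `W`) sections which at every point of `W` are linearly independent and span the
fiber of `U`. (Over an open subset of `𝔸^1` every vector bundle is trivial, so this
is equivalent to being a vector subbundle.) -/
def IsVecSubbundleOn {k : Type*} [Field k] {N : ℕ} (W : Set k)
    (U : Set (Fin (N + 1) → k)) (r : ℕ) : Prop :=
  ∃ F : Fin r → Fin N → RatFunc k,
    (∀ i j, ∀ x ∈ W, (F i j).denom.eval x ≠ 0) ∧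
    (∀ x ∈ W, LinearIndependent k (fun i : Fin r => fun j : Fin N =>
        (F i j).num.eval x / (F i j).denom.eval x)) ∧
    (∀ x ∈ W, ∀ y : Fin N → k,
      (Fin.cons x y ∈ U ↔ y ∈ Submodule.span k
        (Set.range (fun i : Fin r => fun j : Fin N =>
          (F i j).num.eval x / (F i j).denom.eval x))))

/-- Clearing denominators of a finite family of rational functions. -/
lemma clear_denoms {k : Type*} [Field k] {ι : Type*} [Fintype ι] [DecidableEq ι]
    (g : ι → RatFunc k) (i : ι) :
    g i * algebraMap (Polynomial k) (RatFunc k) (∏ i', (g i').denom)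
      = algebraMap (Polynomial k) (RatFunc k)
        ((g i).num * ∏ i' ∈ Finset.univ.erase i, (g i').denom) := by
  rw [← Finset.mul_prod_erase Finset.univ _ (Finset.mem_univ i), map_mul, map_mul, ← mul_assoc]
  congr 1
  have h := RatFunc.num_div_denom (g i)
  have hden : algebraMap (Polynomial k) (RatFunc k) (g i).denom ≠ 0 :=
    RatFunc.algebraMap_ne_zero (g i).denom_ne_zero
  nth_rewrite 1 [← h]
  rw [div_mul_cancel₀ _ hden]

lemma mv_aeval_eq_eval {k : Type*} [CommRing k] {σ : Type*} (z : σ → k)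
    (p : MvPolynomial σ k) : MvPolynomial.aeval z p = MvPolynomial.eval z p := by
  rw [MvPolynomial.aeval_def, MvPolynomial.eval]
  simp [MvPolynomial.eval₂, Algebra.algebraMap_self]

lemma eval_mv_aeval {k : Type*} [CommRing k] {n : ℕ} (g : Fin n → Polynomial k)
    (p : MvPolynomial (Fin n) k) (t : k) :
    Polynomial.eval t (MvPolynomial.aeval g p) = MvPolynomial.eval (fun i => (g i).eval t) p := by
  have h := MvPolynomial.comp_aeval_apply (f := g) (Polynomial.aeval t : Polynomial k →ₐ[k] k) p
  rw [← mv_aeval_eq_eval]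
  simpa [Polynomial.coe_aeval_eq_eval] using h

lemma mv_eval_poly_aeval {k : Type*} [CommRing k] {n : ℕ} (z : Fin (n+1) → k)
    (c : Polynomial k) :
    MvPolynomial.eval z (Polynomial.aeval (MvPolynomial.X 0 : MvPolynomial (Fin (n+1)) k) c)
      = c.eval (z 0) := by
  have h := Polynomial.aeval_algHom_apply
    (MvPolynomial.aeval z : MvPolynomial (Fin (n+1)) k →ₐ[k] k)
    (MvPolynomial.X 0) c
  rw [← mv_aeval_eq_eval]
  simpa [Polynomial.coe_aeval_eq_eval] using h.symm

set_option maxHeartbeats 4000000 in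
set_option synthInstance.maxHeartbeats 1000000 in
/-- **Lemma 2.6** (Ghioca-Xie). Let `D` be a finite subset of `𝔸^1(k)` and let `U` be
an irreducible closed subvariety of `𝔸^1 × 𝔸^N` such that `U ∩ π⁻¹(𝔸^1 \ D)` is a
vector subbundle of the trivial bundle over `𝔸^1 \ D` and `U` is the Zariski closure
of this family. Then `U` is a vector subbundle of the trivial bundle over all
of `𝔸^1`. -/
theorem vector_subbundle_extends
    {k : Type*} [Field k] [IsAlgClosed k] [CharZero k]
    (N : ℕ) (hN : 0 < N)
    (D : Set k) (hD : D.Finite)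
    (U : Set (Fin (N + 1) → k)) (hUcl : IsAlgSet U) (hUirr : IsIrredAlg U)
    (r : ℕ)
    (hbundle : IsVecSubbundleOn Dᶜ U r)
    (hclos : U = zClosure {p | p ∈ U ∧ p 0 ∉ D}) :
    IsVecSubbundleOn (Set.univ : Set k) U r := by
  classical
  obtain ⟨F, hFden, hFind, hFspan⟩ := hbundle
  -- the embedding of polynomial vectors into rational vectors
  set φ : (Fin N → Polynomial k) →ₗ[Polynomial k] (Fin N → RatFunc k) :=
    LinearMap.pi (fun j => (Algebra.linearMap (Polynomial k) (RatFunc k)).comp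
      (LinearMap.proj j)) with hφdef
  have hφ : ∀ (v : Fin N → Polynomial k) (j : Fin N),
      φ v j = algebraMap (Polynomial k) (RatFunc k) (v j) := fun v j => rfl
  have hφinj : Function.Injective φ := fun a b hab => by
    funext j
    exact RatFunc.algebraMap_injective k (by simpa [hφdef] using congrFun hab j)
  set KSpan : Submodule (RatFunc k) (Fin N → RatFunc k) :=
    Submodule.span (RatFunc k) (Set.range (fun i : Fin r => fun j => F i j)) with hKSpan
  set L : Submodule (Polynomial k) (Fin N → Polynomial k) :=
    (KSpan.restrictScalars (Polynomial k)).comap φ with hL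
  have hinL : ∀ v : Fin N → Polynomial k, v ∈ L ↔ φ v ∈ KSpan := fun v => Iff.rfl
  -- L is saturated
  have hsat : ∀ (c : Polynomial k) (v : Fin N → Polynomial k), c ≠ 0 → c • v ∈ L → v ∈ L := by
    intro c v hc hcv
    rw [hinL, map_smul] at hcv
    have h2 : (algebraMap (Polynomial k) (RatFunc k) c) • φ v ∈ KSpan := by
      rwa [algebraMap_smul]
    have hc' : (algebraMap (Polynomial k) (RatFunc k) c) ≠ 0 :=
      (map_ne_zero_iff _ (RatFunc.algebraMap_injective k)).2 hc
    have h3 := KSpan.smul_mem (algebraMap (Polynomial k) (RatFunc k) c)⁻¹ h2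
    rwa [inv_smul_smul₀ hc', ← hinL] at h3
  -- the quotient is torsion-free, hence free, hence projective; split
  have : NoZeroSMulDivisors (Polynomial k) ((Fin N → Polynomial k) ⧸ L) := by
    constructor
    intro c x hcx
    by_cases hc : c = 0
    · exact Or.inl hc
    · refine Or.inr ?_
      obtain ⟨v, rfl⟩ := L.mkQ_surjective x
      rw [← map_smul, Submodule.mkQ_apply, Submodule.Quotient.mk_eq_zero] at hcx
      rw [Submodule.mkQ_apply, Submodule.Quotient.mk_eq_zero]
      exact hsat c v hc hcx
  obtain ⟨s, hs⟩ := Module.projective_lifting_property L.mkQ LinearMap.id L.mkQ_surjective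
  set P : (Fin N → Polynomial k) →ₗ[Polynomial k] (Fin N → Polynomial k) :=
    LinearMap.id - s.comp L.mkQ with hP
  have hPL : ∀ v, P v ∈ L := by
    intro v
    have h0 : L.mkQ (P v) = 0 := by
      have := congrFun (congrArg DFunLike.coe hs) (L.mkQ v)
      simp only [LinearMap.comp_apply, LinearMap.id_apply] at this
      rw [hP]
      simp only [LinearMap.sub_apply, LinearMap.comp_apply, LinearMap.id_apply, map_sub, this]
      exact sub_self _
    rwa [Submodule.mkQ_apply, Submodule.Quotient.mk_eq_zero] at h0
  have hPfix : ∀ v ∈ L, P v = v := by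
    intro v hv
    have h0 : L.mkQ v = 0 := by rwa [Submodule.mkQ_apply, Submodule.Quotient.mk_eq_zero]
    simp [hP, LinearMap.sub_apply, ← Submodule.mkQ_apply, h0]
  -- a basis of L
  obtain ⟨m, b⟩ := Submodule.basisOfPid (Pi.basisFun (Polynomial k) (Fin N)) L
  set W : Fin m → Fin N → Polynomial k := fun i => (b i : Fin N → Polynomial k) with hW
  have hWL : ∀ i, W i ∈ L := fun i => (b i).2
  have hWspan : ∀ v ∈ L, ∃ c : Fin m → Polynomial k, v = ∑ i, c i • W i := by
    intro v hv
    refine ⟨fun i => b.repr ⟨v, hv⟩ i, ?_⟩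
    have hbr := b.sum_repr ⟨v, hv⟩
    calc v = ((∑ i, b.repr ⟨v, hv⟩ i • b i : L) : Fin N → Polynomial k) := by rw [hbr]
    _ = ∑ i, b.repr ⟨v, hv⟩ i • W i := by
        push_cast [Submodule.coe_sum]
        rfl
  have hWind : ∀ c : Fin m → Polynomial k, ∑ i, c i • W i = 0 → ∀ i, c i = 0 := by
    intro c hc i
    have h1 : (∑ j, c j • b j : L) = 0 := by
      apply Subtype.ext
      push_cast [Submodule.coe_sum]
      exact hc
    exact Fintype.linearIndependent_iff.1 b.linearIndependent c h1 i
  -- matrix of P and evaluation identities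
  set Pmat : Fin N → Fin N → Polynomial k :=
    fun l => P (Pi.single l (1 : Polynomial k)) with hPmat
  have hPapp : ∀ (v : Fin N → Polynomial k) (j : Fin N), P v j = ∑ l, v l * Pmat l j := by
    intro v j
    have hv : v = ∑ l, v l • (Pi.single l (1:Polynomial k) : Fin N → Polynomial k) := by
      funext j'
      simp [Finset.sum_apply, Pi.single_apply]
    conv_lhs => rw [hv, map_sum]
    simp only [map_smul]
    simp [Finset.sum_apply, hPmat, smul_eq_mul]
  have hcombeval : ∀ (c : Fin m → Polynomial k) (x : k) (j : Fin N),
      ((∑ i, c i • W i) j).eval x = ∑ i, (c i).eval x * (W i j).eval x := by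
    intro c x j
    simp [Finset.sum_apply, Polynomial.eval_finset_sum, smul_eq_mul]
  have hPeval : ∀ (v : Fin N → Polynomial k) (x : k) (j : Fin N),
      (P v j).eval x = ∑ l, (v l).eval x * (Pmat l j).eval x := by
    intro v x j
    rw [hPapp]
    simp [Polynomial.eval_finset_sum]
  have hWfixev : ∀ (i : Fin m) (x : k) (j : Fin N),
      ∑ l, (W i l).eval x * (Pmat l j).eval x = (W i j).eval x := by
    intro i x j
    rw [← hPeval, hPfix _ (hWL i)]
  -- vectors fixed by the evaluated matrix lie in the span of the evaluated basis
  have hfixmem : ∀ (x : k) (y : Fin N → k), (∀ j, ∑ l, y l * (Pmat l j).eval x = y j) →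
      y ∈ Submodule.span k (Set.range fun i => fun j => (W i j).eval x) := by
    intro x y hy
    obtain ⟨c, hc⟩ := hWspan _ (hPL fun l => C (y l))
    have hyeq : y = ∑ i, (c i).eval x • (fun j => (W i j).eval x) := by
      funext j
      have h1 : (P (fun l => C (y l)) j).eval x = y j := by
        rw [hPeval]; simpa using hy j
      rw [hc, hcombeval] at h1
      simpa [Finset.sum_apply] using h1.symm
    rw [hyeq]
    exact Submodule.sum_smul_mem _ _ fun i _ => Submodule.subset_span ⟨i, rfl⟩
  -- the evaluated basis is linearly independent at every point
  have hWindev : ∀ x : k, LinearIndependent k (fun i => fun j => (W i j).eval x) := by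
    intro x
    rw [Fintype.linearIndependent_iff]
    intro g hg i
    set u : Fin N → Polynomial k := ∑ i, (C (g i) : Polynomial k) • W i with hu
    have huL : u ∈ L := Submodule.sum_mem _ fun i _ => Submodule.smul_mem _ _ (hWL i)
    have huev : ∀ j, (u j).eval x = 0 := by
      intro j
      rw [hu, hcombeval]
      simpa [Finset.sum_apply] using congrFun hg j
    have hdvd : ∀ j, (X - C x) ∣ u j := fun j => Polynomial.dvd_iff_isRoot.2 (huev j)
    choose m' hm' using hdvd
    have humeq : u = (X - C x) • m' := by
      funext j; simp [Pi.smul_apply, smul_eq_mul, hm' j]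
    obtain ⟨c, hc⟩ := hWspan _ (hPL m')
    have h2 : u = ∑ i, ((X - C x) * c i) • W i := by
      calc u = P u := (hPfix _ huL).symm
      _ = (X - C x) • P m' := by rw [humeq, map_smul]
      _ = ∑ i, ((X - C x) * c i) • W i := by
          rw [hc, Finset.smul_sum]
          simp [smul_smul]
    have h3 : ∀ i, C (g i) = (X - C x) * c i := by
      intro i
      have h4 : ∑ i, (C (g i) - (X - C x) * c i) • W i = 0 := by
        simp only [sub_smul, Finset.sum_sub_distrib]
        rw [← hu, ← h2, sub_self]
      exact sub_eq_zero.mp (hWind _ h4 i)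
    have := congrArg (Polynomial.eval x) (h3 i)
    simpa using this
  -- the evaluated fibers of F lie in the span of the evaluated basis (outside D)
  have hFmem : ∀ x ∉ D, ∀ i : Fin r, (fun j => (F i j).num.eval x / (F i j).denom.eval x)
      ∈ Submodule.span k (Set.range fun i' => fun j => (W i' j).eval x) := by
    intro x hx i
    set q : Fin N → Polynomial k :=
      fun j => (F i j).num * ∏ j' ∈ Finset.univ.erase j, (F i j').denom with hq
    set d : Polynomial k := ∏ j', (F i j').denom with hd
    have hqL : q ∈ L := by
      rw [hinL]
      have hφq : φ q = algebraMap (Polynomial k) (RatFunc k) d • fun j => F i j := by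
        funext j
        rw [hφ, Pi.smul_apply, smul_eq_mul, mul_comm, hq, hd]
        exact (clear_denoms (fun j' => F i j') j).symm
      rw [hφq]
      exact Submodule.smul_mem _ _ (Submodule.subset_span ⟨i, rfl⟩)
    obtain ⟨c, hc⟩ := hWspan q hqL
    have hFq : (fun j => (F i j).num.eval x / (F i j).denom.eval x)
        = (d.eval x)⁻¹ • fun j => (q j).eval x := by
      funext j
      have h1 : d.eval x
          = (F i j).denom.eval x * ∏ j' ∈ Finset.univ.erase j, ((F i j').denom).eval x := by
        rw [hd, Polynomial.eval_prod, ← Finset.mul_prod_erase Finset.univ _ (Finset.mem_univ j)]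
      have h2 : (q j).eval x
          = (F i j).num.eval x * ∏ j' ∈ Finset.univ.erase j, ((F i j').denom).eval x := by
        rw [hq]; simp [Polynomial.eval_prod]
      have h3 : ((F i j).denom).eval x ≠ 0 := hFden i j x hx
      have h4 : (∏ j' ∈ Finset.univ.erase j, ((F i j').denom).eval x) ≠ 0 :=
        Finset.prod_ne_zero_iff.2 fun j' _ => hFden i j' x hx
      rw [Pi.smul_apply, smul_eq_mul, h2, h1]
      field_simp
    rw [hFq]
    refine Submodule.smul_mem _ _ ?_
    have h5 : (fun j => (q j).eval x) = ∑ i', (c i').eval x • fun j => (W i' j).eval x := by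
      funext j
      rw [hc, hcombeval]
      simp [Finset.sum_apply]
    rw [h5]
    exact Submodule.sum_smul_mem _ _ fun i' _ => Submodule.subset_span ⟨i', rfl⟩
  have hFle : ∀ x ∉ D,
      Submodule.span k (Set.range (fun i : Fin r => fun j : Fin N =>
        (F i j).num.eval x / (F i j).denom.eval x))
      ≤ Submodule.span k (Set.range fun i' => fun j => (W i' j).eval x) := by
    intro x hx
    exact Submodule.span_le.2 (Set.range_subset_iff.2 fun i => hFmem x hx i)
  -- m = r
  have hmr : m = r := by
    -- m ≤ r
    have hmlr : m ≤ r := by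
      have hWK : ∀ i, φ (W i) ∈ KSpan := fun i => (hinL _).1 (hWL i)
      have hind : LinearIndependent (RatFunc k) (fun i => φ (W i)) := by
        rw [Fintype.linearIndependent_iff]
        intro g hg i
        set d : Polynomial k := ∏ i', (g i').denom with hd
        have hd0 : algebraMap (Polynomial k) (RatFunc k) d ≠ 0 :=
          RatFunc.algebraMap_ne_zero
            (Finset.prod_ne_zero_iff.2 fun i' _ => (g i').denom_ne_zero)
        set p : Fin m → Polynomial k :=
          fun i => (g i).num * ∏ i' ∈ Finset.univ.erase i, (g i').denom with hp
        have hpg : ∀ i, algebraMap (Polynomial k) (RatFunc k) (p i)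
            = g i * algebraMap _ _ d := fun i => (clear_denoms g i).symm
        have hsum : φ (∑ i, p i • W i) = 0 := by
          rw [map_sum]
          have h1 : ∀ i, φ (p i • W i)
              = algebraMap (Polynomial k) (RatFunc k) d • (g i • φ (W i)) := by
            intro i
            rw [map_smul, ← algebraMap_smul (RatFunc k) (p i) (φ (W i)), hpg i,
              mul_comm, mul_smul]
          simp_rw [h1]
          rw [← Finset.smul_sum, hg, smul_zero]
        have hz : ∀ i, p i = 0 := hWind _ (hφinj (by rw [hsum, map_zero]))
        have h2 : g i * algebraMap (Polynomial k) (RatFunc k) d = 0 := by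
          rw [← hpg, hz i, map_zero]
        exact (mul_eq_zero.1 h2).resolve_right hd0
      have hle : Submodule.span (RatFunc k) (Set.range fun i => φ (W i)) ≤ KSpan :=
        Submodule.span_le.2 (Set.range_subset_iff.2 fun i => hWK i)
      haveI : FiniteDimensional (RatFunc k) KSpan :=
        FiniteDimensional.span_of_finite _ (Set.finite_range _)
      calc m = Fintype.card (Fin m) := by simp
      _ = Module.finrank (RatFunc k)
          (Submodule.span (RatFunc k) (Set.range fun i => φ (W i))) :=
          (finrank_span_eq_card hind).symm
      _ ≤ Module.finrank (RatFunc k) KSpan := Submodule.finrank_mono hle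
      _ ≤ Fintype.card (Fin r) := finrank_range_le_card _
      _ = r := by simp
    -- r ≤ m
    have hrlm : r ≤ m := by
      obtain ⟨x₀, hx₀⟩ := (hD.infinite_compl).nonempty
      haveI : FiniteDimensional k
          (Submodule.span k (Set.range fun i' => fun j => (W i' j).eval x₀)) :=
        FiniteDimensional.span_of_finite _ (Set.finite_range _)
      calc r = Fintype.card (Fin r) := by simp
      _ = Module.finrank k (Submodule.span k (Set.range (fun i : Fin r => fun j : Fin N =>
            (F i j).num.eval x₀ / (F i j).denom.eval x₀))) :=
          (finrank_span_eq_card (hFind x₀ hx₀)).symm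
      _ ≤ Module.finrank k
          (Submodule.span k (Set.range fun i' => fun j => (W i' j).eval x₀)) :=
          Submodule.finrank_mono (hFle x₀ hx₀)
      _ ≤ Fintype.card (Fin m) := finrank_range_le_card _
      _ = m := by simp
    omega
  subst hmr
  -- spans agree outside D
  have hspaneq : ∀ x ∉ D,
      Submodule.span k (Set.range (fun i : Fin m => fun j : Fin N =>
        (F i j).num.eval x / (F i j).denom.eval x))
      = Submodule.span k (Set.range fun i' => fun j => (W i' j).eval x) := by
    intro x hx
    haveI : FiniteDimensional k
        (Submodule.span k (Set.range fun i' => fun j => (W i' j).eval x)) :=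
      FiniteDimensional.span_of_finite _ (Set.finite_range _)
    refine Submodule.eq_of_le_of_finrank_le (hFle x hx) ?_
    calc Module.finrank k (Submodule.span k (Set.range fun i' => fun j => (W i' j).eval x))
        ≤ Fintype.card (Fin m) := finrank_range_le_card _
    _ = Module.finrank k (Submodule.span k (Set.range (fun i : Fin m => fun j : Fin N =>
          (F i j).num.eval x / (F i j).denom.eval x))) :=
        (finrank_span_eq_card (hFind x hx)).symm
  -- defining equations for U
  obtain ⟨I, hI⟩ := hUcl
  -- the backward direction: evaluated spans are contained in fibers of U
  have hback : ∀ x : k, ∀ y : Fin N → k,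
      y ∈ Submodule.span k (Set.range fun i' => fun j => (W i' j).eval x) →
      Fin.cons x y ∈ U := by
    intro x y hy
    rw [Submodule.mem_span_range_iff_exists_fun] at hy
    obtain ⟨c, hc⟩ := hy
    set spoly : Fin N → Polynomial k := fun j => ∑ i, C (c i) * W i j with hspoly
    have hsev : ∀ t : k, (fun j => (spoly j).eval t)
        = ∑ i, c i • (fun j => (W i j).eval t) := by
      intro t
      funext j
      simp [hspoly, Finset.sum_apply, Polynomial.eval_finset_sum]
    have hsU : ∀ t ∉ D, Fin.cons t (fun j => (spoly j).eval t) ∈ U := by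
      intro t ht
      rw [hFspan t ht]
      rw [hspaneq t ht, hsev t]
      exact Submodule.sum_smul_mem _ _ fun i _ => Submodule.subset_span ⟨i, rfl⟩
    rw [hI]
    intro p hp
    set qq : Polynomial k :=
      MvPolynomial.aeval (Fin.cons X spoly : Fin (N + 1) → Polynomial k) p with hqq
    have hqqev : ∀ t : k, qq.eval t
        = MvPolynomial.eval (Fin.cons t (fun j => (spoly j).eval t)) p := by
      intro t
      rw [hqq, eval_mv_aeval]
      have harg : (fun i => ((Fin.cons X spoly : Fin (N + 1) → Polynomial k) i).eval t)
          = Fin.cons t (fun j => (spoly j).eval t) := by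
        funext i
        refine Fin.cases ?_ (fun j => ?_) i
        · simp only [Fin.cons_zero, Polynomial.eval_X]
        · simp only [Fin.cons_succ]
      rw [harg]
    have hqq0 : qq = 0 := by
      refine Polynomial.eq_zero_of_infinite_isRoot _ ?_
      apply Set.Infinite.mono (s := Dᶜ) ?_ hD.infinite_compl
      intro t ht
      have := hsU t ht
      rw [hI] at this
      simpa [Polynomial.IsRoot, hqqev t] using this p hp
    have := hqqev x
    rw [hqq0] at this
    simp only [Polynomial.eval_zero] at this
    have hyx : (fun j => (spoly j).eval x) = y := by
      rw [hsev x, ← hc]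
    rw [hyx] at this
    exact this.symm
  -- the forward direction, via the closed set of fixed vectors
  have hforward : ∀ x : k, ∀ y : Fin N → k, Fin.cons x y ∈ U →
      y ∈ Submodule.span k (Set.range fun i' => fun j => (W i' j).eval x) := by
    have htoMv : ∀ (z : Fin (N+1) → k) (cc : Polynomial k),
        MvPolynomial.eval z
          (Polynomial.aeval (MvPolynomial.X 0 : MvPolynomial (Fin (N+1)) k) cc)
        = cc.eval (z 0) := fun z cc => mv_eval_poly_aeval z cc
    set IV : Set (MvPolynomial (Fin (N+1)) k) :=
      Set.range (fun j : Fin N =>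
        (∑ l, Polynomial.aeval (MvPolynomial.X 0 : MvPolynomial (Fin (N+1)) k) (Pmat l j)
          * MvPolynomial.X l.succ) - MvPolynomial.X j.succ) with hIV
    set V : Set (Fin (N+1) → k) := {z | ∀ p ∈ IV, MvPolynomial.eval z p = 0} with hV
    have hVmem : ∀ z : Fin (N+1) → k, z ∈ V ↔
        ∀ j : Fin N, ∑ l, z l.succ * (Pmat l j).eval (z 0) = z j.succ := by
      intro z
      constructor
      · intro hz j
        have := hz _ ⟨j, rfl⟩
        simp only [map_sub, map_sum, map_mul, MvPolynomial.eval_X, htoMv, sub_eq_zero] at this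
        rw [← this]
        exact Finset.sum_congr rfl fun l _ => mul_comm _ _
      · intro hz p hp
        obtain ⟨j, rfl⟩ := hp
        simp only [map_sub, map_sum, map_mul, MvPolynomial.eval_X, htoMv, sub_eq_zero]
        rw [← hz j]
        exact Finset.sum_congr rfl fun l _ => mul_comm _ _
    have hUV : U ⊆ V := by
      rw [hclos]
      apply Set.sInter_subset_of_mem
      refine ⟨⟨IV, rfl⟩, ?_⟩
      rintro z ⟨hzU, hzD⟩
      rw [hVmem]
      intro j
      have htail : Fin.tail z ∈ Submodule.span k
          (Set.range fun i' => fun j' => (W i' j').eval (z 0)) := by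
        rw [← hspaneq (z 0) hzD]
        have := (hFspan (z 0) hzD (Fin.tail z)).1 (by rwa [Fin.cons_self_tail])
        exact this
      -- vectors in the span of evaluated W are fixed
      rw [Submodule.mem_span_range_iff_exists_fun] at htail
      obtain ⟨c, hc⟩ := htail
      have hfix : ∀ j : Fin N,
          ∑ l, (Fin.tail z) l * (Pmat l j).eval (z 0) = (Fin.tail z) j := by
        intro j'
        rw [← hc]
        have hcl : ∀ l, (∑ i, c i • fun j'' => (W i j'').eval (z 0)) l
            = ∑ i, c i * (W i l).eval (z 0) := by
          intro l; simp [Finset.sum_apply]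
        simp_rw [hcl, Finset.sum_mul]
        rw [Finset.sum_comm]
        refine Finset.sum_congr rfl fun i _ => ?_
        rw [← hWfixev i (z 0) j', Finset.mul_sum]
        exact Finset.sum_congr rfl fun l _ => by ring
      have := hfix j
      simpa [Fin.tail] using this
    intro x y hxy
    have hzV := hUV hxy
    rw [hVmem] at hzV
    refine hfixmem x y ?_
    intro j
    have := hzV j
    simpa [Fin.cons_succ] using this
  -- assemble
  refine ⟨fun i j => algebraMap (Polynomial k) (RatFunc k) (W i j), ?_, ?_, ?_⟩
  · intro i j x _
    simp [RatFunc.denom_algebraMap]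
  · intro x _
    have h := hWindev x
    simpa [RatFunc.num_algebraMap, RatFunc.denom_algebraMap] using h
  · intro x _ y
    constructor
    · intro h
      have := hforward x y h
      simpa [RatFunc.num_algebraMap, RatFunc.denom_algebraMap] using this
    · intro h
      refine hback x y ?_
      simpa [RatFunc.num_algebraMap, RatFunc.denom_algebraMap] using h

end DML
end
end

section
/- Let k be an algebraically closed field of characteristic 0, g ∈ k(x) with deg g ≥ 2, and α ∈ P^1_k(k) with infinite g-orbit; embed k(x) into Seq_k via h ↦ (h(g^n(α)))_{n≥0}. Then for any A ∈ GL_ℓ(k(x)) there exists a fundamental solution matrix Y ∈ GL_ℓ(Seq_k) with σ(Y) = AY; moreover every entry of Y, every element of k(x)[Y_ij, 1/det(Y)], and more generally every element of a finite-dimensional σ-stable k(x)-subspace of Seq_k, satisfies a linear difference equation over k(x). -/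
/-!
Formalization of a statement from "The Dynamical Mordell-Lang Conjecture for
skew-linear self-maps" by D. Ghioca and J. Xie (with an appendix by M. Wibmer).
-/

noncomputable section

namespace DML

open scoped Classical

open Polynomial Filter

/-- The degree of (the self-map of `ℙ^1` induced by) a rational function
`g ∈ k(x)`: the maximum of the degrees of its numerator and denominator. -/
def ratDegree {k : Type*} [Field k] (g : RatFunc k) : ℕ :=
  max g.num.natDegree g.denom.natDegree

/-- The self-map of `ℙ^1(k) = k ∪ {∞}` (modelled as `Option k`, with `none` the point
at infinity) induced by a rational function `g ∈ k(x)`. -/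
def ratApply {k : Type*} [Field k] (g : RatFunc k) : Option k → Option k
  | Option.some a =>
      if g.denom.eval a = 0 then Option.none
      else Option.some (g.num.eval a / g.denom.eval a)
  | Option.none =>
      if g.denom.natDegree < g.num.natDegree then Option.none
      else Option.some (g.num.coeff g.denom.natDegree / g.denom.leadingCoeff)

/-- The value (in `k`) of a rational function `h ∈ k(x)` at a point of
`ℙ^1(k) = k ∪ {∞}` (junk value `0` where `h` has a pole). -/
def rEval {k : Type*} [Field k] (h : RatFunc k) : Option k → k
  | Option.some a => h.num.eval a / h.denom.eval a
  | Option.none => h.num.coeff h.denom.natDegree / h.denom.leadingCoeff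

/-- The rational function `h ∈ k(x)` is defined (with finite value) at the given point
of `ℙ^1(k) = k ∪ {∞}`. -/
def rDefined {k : Type*} [Field k] (h : RatFunc k) : Option k → Prop
  | Option.some a => h.denom.eval a ≠ 0
  | Option.none => h.num.natDegree ≤ h.denom.natDegree

/-- The difference ring `Seq_k` of sequences in `k`: sequences `(a_n)_{n ≥ 0}` with two
sequences identified if they agree for all sufficiently large `n` (i.e. germs at
infinity), with componentwise ring operations. -/
abbrev Seq (k : Type*) := Filter.Germ (Filter.atTop : Filter ℕ) k

/-- The shift endomorphism `σ` of `Seq_k`: `σ((a_n)_n) = (a_{n+1})_n`. -/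
def seqShift {k : Type*} (a : Seq k) : Seq k :=
  a.compTendsto (fun n => n + 1) (Filter.tendsto_add_atTop_nat 1)

/-- The image of `c ∈ k` in `Seq_k` as a constant sequence. -/
def seqConst {k : Type*} (c : k) : Seq k := (↑(fun _ : ℕ => c) : Seq k)

/-- The embedding `k(x) → Seq_k`, `h ↦ (h(g^n(α)))_n`, where `g ∈ k(x)` and
`α ∈ ℙ^1(k)` (junk values at the finitely many `n` for which `h` is not defined at
`g^n(α)`; these do not affect the germ when the `g`-orbit of `α` is infinite). -/
def seqOfRat {k : Type*} [Field k] (g : RatFunc k) (α : Option k) (h : RatFunc k) :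
    Seq k :=
  (↑(fun n : ℕ => rEval h ((ratApply g)^[n] α)) : Seq k)

/-- The subring `k(x)[Y_{ij}, 1/det Y]` of `Seq_k` generated by the image of `k(x)`,
the entries of the matrix `Y`, and the inverse of `det Y`. -/
def genRing {k : Type*} [Field k] (g : RatFunc k) (α : Option k) {ℓ : ℕ}
    (Y : Matrix (Fin ℓ) (Fin ℓ) (Seq k)) : Subring (Seq k) :=
  Subring.closure
    (Set.range (seqOfRat g α) ∪ {t | ∃ i j, Y i j = t} ∪ {t | Y.det * t = 1})

/-- `a ∈ Seq_k` satisfies a linear difference equation over (the image of) `k(x)`. -/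
def SatisfiesLinDiffEq {k : Type*} [Field k] (g : RatFunc k) (α : Option k)
    (a : Seq k) : Prop :=
  ∃ m : ℕ, 1 ≤ m ∧ ∃ c : Fin m → RatFunc k,
    seqShift^[m] a = ∑ i : Fin m, seqOfRat g α (c i) * seqShift^[(i : ℕ)] a

end DML

/-!
Along an infinite orbit, any rational function is eventually defined, so evaluation along
the orbit is a ring homomorphism `k(x) → Seq_k`; it intertwines `h ↦ h ∘ g` with the shift
`σ`, because both sides are ring homomorphisms agreeing on constants and on `x`. This makes
`Seq_k` a `k(x)`-algebra on which `σ` acts semilinearly.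

A fundamental matrix exists for any `A` with invertible determinant over `Seq_k`: past the finitely
many `n` where `A(n)` is singular, take the germ of the products `A(n - 1) ⋯ A(N)`.

A sequence `a` satisfies a linear difference equation as soon as the `k(x)`-span of its shifts
`σⁿ a` is finite-dimensional (a first shift that depends on the earlier ones gives the equation).
Sequences with this property form a subalgebra, since the shifts of `a + b` and `a b` lie in the
sum and the product of the spans for `a` and `b`. The entries of `Y` span a `σ`-stable space since
`σ Y = A Y`, and `1 / det Y` spans one since `σ (1 / det Y) = (det A)⁻¹ / det Y`.
-/

open Filter Set Submodule

theorem Function.injective_iterate_of_infinite_range {α : Type*} {f : α → α} {x : α}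
    (h : (range fun n => f^[n] x).Infinite) : Function.Injective fun n => f^[n] x := by
  intro m m' hmm'
  by_contra hne
  wlog hlt : m < m' generalizing m m'
  · exact this hmm'.symm (Ne.symm hne) (by omega)
  have hper : IsPeriodicPt f (m' - m) (f^[m] x) := by
    rw [IsPeriodicPt, IsFixedPt, ← Function.iterate_add_apply, Nat.sub_add_cancel hlt.le]
    exact hmm'.symm
  refine h (((finite_Iio m').image fun n => f^[n] x).subset ?_)
  rintro _ ⟨n, rfl⟩
  rcases lt_or_ge n m with hn | hn
  · exact ⟨n, hn.trans hlt, rfl⟩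
  refine ⟨(n - m) % (m' - m) + m, ?_, ?_⟩
  · have := Nat.mod_lt (n - m) (Nat.sub_pos_of_lt hlt)
    simp only [mem_Iio]
    omega
  · simp only
    rw [Function.iterate_add_apply, hper.iterate_mod_apply, ← Function.iterate_add_apply,
      Nat.sub_add_cancel hn]

namespace Filter.Germ

variable {α M : Type*} {l : Filter α}

theorem isUnit_coe_iff [Monoid M] {u : α → M} :
    IsUnit (u : Germ l M) ↔ ∀ᶠ x in l, IsUnit (u x) := by
  classical
  constructor
  · rintro ⟨⟨_, v, huv, hvu⟩, rfl⟩
    induction v using Germ.inductionOn with | _ v =>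
    rw [← coe_mul, ← coe_one, coe_eq] at huv hvu
    filter_upwards [huv, hvu] with x h₁ h₂
    exact isUnit_iff_exists.mpr ⟨v x, h₁, h₂⟩
  · intro hu
    let v x := if h : IsUnit (u x) then ((h.unit⁻¹ : Mˣ) : M) else 1
    refine isUnit_iff_exists.mpr ⟨↑v, ?_, ?_⟩ <;>
      rw [← coe_mul, ← coe_one, coe_eq] <;>
      filter_upwards [hu] with x hx <;> simp [v, hx]

variable {m n : Type*}

def matrix (l : Filter α) (Z : α → Matrix m n M) : Matrix m n (Germ l M) :=
  Matrix.of fun i j => ↑fun x => Z x i j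

theorem exists_matrix_eq (Y : Matrix m n (Germ l M)) : ∃ Z, matrix l Z = Y := by
  choose f hf using fun i j => Quot.exists_rep (Y i j)
  exact ⟨fun x i j => f i j x, Matrix.ext fun i j => hf i j⟩

theorem matrix_congr {Z W : α → Matrix m n M} (h : ∀ᶠ x in l, Z x = W x) :
    matrix l Z = matrix l W :=
  Matrix.ext fun i j => coe_eq.mpr (h.mono fun _ hx => congrFun (congrFun hx i) j)

variable [Fintype n] [CommRing M]

theorem matrix_mul (Z W : α → Matrix n n M) :
    matrix l (fun x => Z x * W x) = matrix l Z * matrix l W := by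
  ext i j
  have : (fun x => (Z x * W x) i j) = ∑ c, (fun x => Z x i c) * fun x => W x c j := by
    ext x
    simp [Matrix.mul_apply]
  change coeRingHom l _ = ∑ c, coeRingHom l _ * coeRingHom l _
  simp only [this, map_sum, map_mul]

theorem det_matrix [DecidableEq n] (Z : α → Matrix n n M) :
    (matrix l Z).det = ↑fun x => (Z x).det := by
  let Zf : Matrix n n (α → M) := Matrix.of fun i j x => Z x i j
  have hZf : Zf.det = fun x => (Z x).det := funext fun x =>
    RingHom.map_det (Pi.evalRingHom (fun _ => M) x) Zf
  rw [← hZf]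
  exact (RingHom.map_det (coeRingHom l) Zf).symm

end Filter.Germ

theorem exists_isUnit_and_eventually_succ_eq_mul {M : Type*} [Monoid M] {a : ℕ → M}
    (ha : ∀ᶠ n in atTop, IsUnit (a n)) :
    ∃ z : ℕ → M, (∀ n, IsUnit (z n)) ∧ ∀ᶠ n in atTop, z (n + 1) = a n * z n := by
  classical
  obtain ⟨N, hN⟩ := eventually_atTop.mp ha
  let b n := if N ≤ n then a n else 1
  have hb : ∀ n, IsUnit (b n) := fun n => by
    by_cases h : N ≤ n
    · simpa [b, h] using hN n h
    · simp [b, h]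
  refine ⟨fun n => Nat.rec 1 (fun n z => b n * z) n, fun n => ?_,
    eventually_atTop.mpr ⟨N, fun n hn => by simp [b, hn]⟩⟩
  induction n with
  | zero => exact isUnit_one
  | succ n ih => exact (hb n).mul ih

theorem Submodule.exists_mem_span_range_fin_of_fg {K M : Type*} [DivisionRing K]
    [AddCommGroup M] [Module K M] {x : ℕ → M} (hx : (span K (range x)).FG) :
    ∃ m, x m ∈ span K (range fun i : Fin m => x i) := by
  by_contra! h
  have hind : ∀ m, LinearIndepOn K x (Iio m) := by
    intro m
    induction m with
    | zero => simp
    | succ m ih =>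
      have hm : range (fun i : Fin m => x i) = x '' Iio m := by
        rw [← Fin.range_val, ← range_comp]
        rfl
      rw [← Order.succ_eq_add_one, Order.Iio_succ_eq_insert, linearIndepOn_insert self_notMem_Iio]
      exact ⟨ih, hm ▸ h m⟩
  have hli : LinearIndependent K x := by
    rw [← linearIndepOn_univ_iff, ← iUnion_Iio]
    exact linearIndepOn_iUnion_of_directed (monotone_Iio.directed_le) hind
  obtain ⟨s, hs⟩ := hx
  have := hli.finite_of_le_span_finite x s (by rw [hs]; exact subset_span)
  exact not_finite ℕ

section DifferenceAlgebra

variable (K : Type*) {R : Type*} [Field K] [CommRing R] [Algebra K R] (σ : R →+* R)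

def orbitSpan (a : R) : Submodule K R :=
  span K (range fun n => (σ ^ n) a)

variable {K σ}

theorem exists_linRecurrence_of_fg_orbitSpan {a : R} (ha : (orbitSpan K σ a).FG) :
    ∃ m, 1 ≤ m ∧ ∃ c : Fin m → K,
      (σ ^ m) a = ∑ i : Fin m, algebraMap K R (c i) * (σ ^ (i : ℕ)) a := by
  obtain ⟨m, hm⟩ := exists_mem_span_range_fin_of_fg ha
  rcases m with _ | m
  · have ha0 : a = 0 := by simpa using hm
    exact ⟨1, le_rfl, 0, by simp [ha0]⟩
  · obtain ⟨c, hc⟩ := (mem_span_range_iff_exists_fun K).mp hm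
    exact ⟨m + 1, by omega, c, by simp [← hc, Algebra.smul_def]⟩

theorem orbitSpan_le_span {V : Set R} (hV : MapsTo σ V V) {a : R} (ha : a ∈ V) :
    orbitSpan K σ a ≤ span K V :=
  span_mono <| range_subset_iff.mpr fun n => by
    rw [RingHom.coe_pow]
    exact hV.iterate n ha

theorem orbitSpan_add_le (a b : R) :
    orbitSpan K σ (a + b) ≤ orbitSpan K σ a ⊔ orbitSpan K σ b :=
  span_le.mpr <| range_subset_iff.mpr fun n => by
    rw [map_add]
    exact add_mem (mem_sup_left (subset_span (mem_range_self n)))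
      (mem_sup_right (subset_span (mem_range_self n)))

theorem orbitSpan_mul_le (a b : R) :
    orbitSpan K σ (a * b) ≤ orbitSpan K σ a * orbitSpan K σ b :=
  span_le.mpr <| range_subset_iff.mpr fun n => by
    rw [map_mul]
    exact Submodule.mul_mem_mul (subset_span (mem_range_self n)) (subset_span (mem_range_self n))

variable (hσ : ∀ c : K, σ (algebraMap K R c) ∈ (algebraMap K R).range)
include hσ

theorem map_mem_span_of_forall_mem {s : Set R} (hs : ∀ x ∈ s, σ x ∈ span K s) {w : R}
    (hw : w ∈ span K s) : σ w ∈ span K s := by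
  induction hw using span_induction with
  | mem x hx => exact hs x hx
  | zero => simp
  | add x y _ _ hx hy => simpa using add_mem hx hy
  | smul c x _ hx =>
    obtain ⟨c', hc'⟩ := hσ c
    rw [Algebra.smul_def, map_mul, ← hc', ← Algebra.smul_def]
    exact smul_mem _ c' hx

theorem fg_orbitSpan_of_mem_span {s : Set R} (hfin : s.Finite) (hs : ∀ x ∈ s, σ x ∈ span K s)
    {a : R} (ha : a ∈ span K s) : (orbitSpan K σ a).FG :=
  (fg_span hfin).of_le <| span_span (R := K) (s := s) ▸
    orbitSpan_le_span (fun _ => map_mem_span_of_forall_mem hσ hs) ha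

variable (σ) in
def finiteOrbitSubalgebra : Subalgebra K R where
  carrier := {a | (orbitSpan K σ a).FG}
  mul_mem' ha hb := (ha.mul hb).of_le (orbitSpan_mul_le _ _)
  add_mem' ha hb := (ha.sup hb).of_le (orbitSpan_add_le _ _)
  algebraMap_mem' c := fg_orbitSpan_of_mem_span hσ (finite_singleton (1 : R))
    (by simp [mem_span_singleton_self])
    (by rw [Algebra.algebraMap_eq_smul_one]; exact smul_mem _ c (mem_span_singleton_self 1))

variable {ι : Type*} [Fintype ι] {A : Matrix ι ι K} {Y : Matrix ι ι R}

theorem entry_mem_finiteOrbitSubalgebra (hY : Y.map σ = A.map (algebraMap K R) * Y) (i j : ι) :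
    Y i j ∈ finiteOrbitSubalgebra σ hσ := by
  refine fg_orbitSpan_of_mem_span hσ (finite_range fun p : ι × ι => Y p.1 p.2) ?_
    (subset_span ⟨(i, j), rfl⟩)
  rintro _ ⟨⟨i, j⟩, rfl⟩
  have hσY : σ (Y i j) = ∑ m, A i m • Y m j := by
    simpa [Matrix.mul_apply, Algebra.smul_def] using congrFun (congrFun hY i) j
  rw [hσY]
  exact sum_mem fun m _ => smul_mem _ _ (subset_span ⟨(m, j), rfl⟩)

theorem mem_finiteOrbitSubalgebra_of_det_mul_eq_one [DecidableEq ι] (hA : A.det ≠ 0)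
    (hY : Y.map σ = A.map (algebraMap K R) * Y) {x : R} (hx : Y.det * x = 1) :
    x ∈ finiteOrbitSubalgebra σ hσ := by
  have hσdet : σ Y.det = algebraMap K R A.det * Y.det := by
    rw [RingHom.map_det, RingHom.mapMatrix_apply, hY, Matrix.det_mul, RingHom.map_det]
    rfl
  have hσx : σ x = A.det⁻¹ • x := by
    have h₁ : algebraMap K R A.det * Y.det * σ x = 1 := by
      rw [← hσdet, ← map_mul, hx, map_one]
    calc σ x = algebraMap K R A.det⁻¹ * (algebraMap K R A.det * Y.det * σ x) * x := by
          rw [← mul_assoc, ← mul_assoc, ← map_mul, inv_mul_cancel₀ hA, map_one, one_mul,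
            mul_right_comm, hx, one_mul]
      _ = A.det⁻¹ • x := by rw [h₁, mul_one, Algebra.smul_def]
  refine fg_orbitSpan_of_mem_span hσ (finite_singleton x) ?_ (mem_span_singleton_self x)
  rintro _ rfl
  rw [hσx]
  exact smul_mem _ _ (mem_span_singleton_self _)

end DifferenceAlgebra

open Polynomial in
theorem RatFunc.map_eq_map_eval {K R : Type*} [Field K] [CommRing R] [Nontrivial R]
    {φ ψ : RatFunc K →+* R} {g : RatFunc K} (hC : ∀ c, φ (RatFunc.C c) = ψ (RatFunc.C c))
    (hX : φ RatFunc.X = ψ g) (h : RatFunc K) :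
    φ h = ψ (h.eval (algebraMap K (RatFunc K)) g) := by
  have hpoly : ∀ p : K[X], φ (algebraMap K[X] (RatFunc K) p) = ψ (aeval g p) := fun p =>
    DFunLike.congr_fun (Polynomial.ringHom_ext (f := φ.comp (algebraMap K[X] (RatFunc K)))
      (g := ψ.comp (aeval g).toRingHom) (fun c => by simp [hC, RatFunc.algebraMap_eq_C])
      (by simp [hX])) p
  have hd : aeval g h.denom ≠ 0 := by
    intro hd0
    have := (isUnit_iff_ne_zero.mpr (RatFunc.algebraMap_ne_zero h.denom_ne_zero)).map φ
    rw [hpoly, hd0, map_zero] at this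
    exact not_isUnit_zero this
  calc φ h = φ h * (ψ (aeval g h.denom) * ψ (aeval g h.denom)⁻¹) := by
        rw [← map_mul, mul_inv_cancel₀ hd, map_one, mul_one]
    _ = φ (h * algebraMap K[X] (RatFunc K) h.denom) * ψ (aeval g h.denom)⁻¹ := by
        rw [map_mul, hpoly, mul_assoc]
    _ = ψ (h.eval (algebraMap K (RatFunc K)) g) := by
        rw [← (div_eq_iff (RatFunc.algebraMap_ne_zero h.denom_ne_zero)).mp
          (RatFunc.num_div_denom h), hpoly, ← map_mul, ← div_eq_mul_inv]
        rfl

namespace DML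

open scoped Classical

open Polynomial Filter Set

section Shift

variable {R : Type*}

theorem seqShift_coe (u : ℕ → R) : seqShift (u : Seq R) = ↑fun n => u (n + 1) :=
  Germ.coe_compTendsto _ _

theorem seqShift_seqConst (c : R) : seqShift (seqConst c) = seqConst c :=
  seqShift_coe _

theorem map_seqShift_matrix {m n : Type*} (Z : ℕ → Matrix m n R) :
    (Germ.matrix atTop Z).map seqShift = Germ.matrix atTop fun n => Z (n + 1) :=
  Matrix.ext fun _ _ => seqShift_coe _

variable [CommRing R]

def seqShiftHom : Seq R →+* Seq R where
  toFun := seqShift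
  map_one' := seqShift_coe _
  map_zero' := seqShift_coe _
  map_mul' a b := Germ.inductionOn₂ a b fun u v => seqShift_coe (u * v)
  map_add' a b := Germ.inductionOn₂ a b fun u v => seqShift_coe (u + v)

theorem seqShiftHom_pow_apply (n : ℕ) (a : Seq R) : (seqShiftHom ^ n) a = seqShift^[n] a := by
  rw [RingHom.coe_pow]
  rfl

theorem exists_fundamentalMatrix {ι : Type*} [Fintype ι] [DecidableEq ι]
    (A : Matrix ι ι (Seq R)) (hA : IsUnit A.det) :
    ∃ Y : Matrix ι ι (Seq R), IsUnit Y.det ∧ Y.map seqShift = A * Y := by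
  obtain ⟨B, rfl⟩ := Germ.exists_matrix_eq A
  rw [Germ.det_matrix, Germ.isUnit_coe_iff] at hA
  obtain ⟨Z, hZ, hZsucc⟩ := exists_isUnit_and_eventually_succ_eq_mul
    (hA.mono fun n => (Matrix.isUnit_iff_isUnit_det (B n)).mpr)
  refine ⟨Germ.matrix atTop Z, ?_, ?_⟩
  · rw [Germ.det_matrix, Germ.isUnit_coe_iff]
    exact Eventually.of_forall fun n => (Matrix.isUnit_iff_isUnit_det _).mp (hZ n)
  · rw [map_seqShift_matrix, ← Germ.matrix_mul]
    exact Germ.matrix_congr hZsucc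

end Shift

section OrbitEvaluation

variable {k : Type*} [Field k] {g : RatFunc k} {α : Option k}

theorem rEval_some (h : RatFunc k) (a : k) : rEval h (some a) = h.eval (RingHom.id k) a := rfl

theorem rEval_C (c : k) (x : Option k) : rEval (RatFunc.C c) x = c := by
  cases x <;> simp [rEval, RatFunc.num_C, RatFunc.denom_C]

theorem seqOfRat_C (c : k) : seqOfRat g α (RatFunc.C c) = seqConst c := by
  simp only [seqOfRat, seqConst, rEval_C]

variable (horb : (range fun n => (ratApply g)^[n] α).Infinite)
include horb

theorem eventually_iterate_eq_some_eval_ne_zero {q : k[X]} (hq : q ≠ 0) :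
    ∀ᶠ n in atTop, ∃ a, (ratApply g)^[n] α = some a ∧ q.eval a ≠ 0 := by
  have hS : (insert none (some '' {a | q.IsRoot a}) : Set (Option k)).Finite :=
    ((finite_setOfPred_isRoot hq).image _).insert _
  have hev := (Function.injective_iterate_of_infinite_range horb).tendsto_cofinite.eventually
    hS.compl_mem_cofinite
  rw [Nat.cofinite_eq_atTop] at hev
  filter_upwards [hev] with n hn
  obtain ⟨a, ha⟩ := Option.ne_none_iff_exists'.mp fun h => hn (h ▸ mem_insert _ _)
  exact ⟨a, ha, fun h0 => hn (ha ▸ mem_insert_of_mem _ ⟨a, h0, rfl⟩)⟩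

theorem seqOfRat_add (x y : RatFunc k) :
    seqOfRat g α (x + y) = seqOfRat g α x + seqOfRat g α y := by
  rw [seqOfRat, seqOfRat, seqOfRat, ← Germ.coe_add, Germ.coe_eq]
  filter_upwards [eventually_iterate_eq_some_eval_ne_zero horb
    (mul_ne_zero x.denom_ne_zero y.denom_ne_zero)] with n ⟨a, ha, hxy⟩
  rw [eval_mul, mul_ne_zero_iff] at hxy
  simp only [Pi.add_apply, ha, rEval_some]
  exact RatFunc.eval_add _ _ hxy.1 hxy.2

theorem seqOfRat_mul (x y : RatFunc k) :
    seqOfRat g α (x * y) = seqOfRat g α x * seqOfRat g α y := by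
  rw [seqOfRat, seqOfRat, seqOfRat, ← Germ.coe_mul, Germ.coe_eq]
  filter_upwards [eventually_iterate_eq_some_eval_ne_zero horb
    (mul_ne_zero x.denom_ne_zero y.denom_ne_zero)] with n ⟨a, ha, hxy⟩
  rw [eval_mul, mul_ne_zero_iff] at hxy
  simp only [Pi.mul_apply, ha, rEval_some]
  exact RatFunc.eval_mul _ _ hxy.1 hxy.2

def seqHom : RatFunc k →+* Seq k where
  toFun := seqOfRat g α
  map_one' := by rw [← map_one RatFunc.C, seqOfRat_C]; rfl
  map_zero' := by rw [← map_zero RatFunc.C, seqOfRat_C]; rfl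
  map_add' := seqOfRat_add horb
  map_mul' := seqOfRat_mul horb

theorem seqShift_seqOfRat_X : seqShift (seqOfRat g α RatFunc.X) = seqOfRat g α g := by
  rw [seqOfRat, seqShift_coe, seqOfRat, Germ.coe_eq]
  filter_upwards [eventually_iterate_eq_some_eval_ne_zero horb g.denom_ne_zero]
    with n ⟨a, ha, hga⟩
  simp only [Function.iterate_succ_apply', ha, ratApply, if_neg hga, rEval_some, RatFunc.eval_X]
  rfl

theorem seqShift_seqOfRat (h : RatFunc k) :
    seqShift (seqOfRat g α h) = seqOfRat g α (h.eval (algebraMap k (RatFunc k)) g) :=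
  RatFunc.map_eq_map_eval (φ := seqShiftHom.comp (seqHom horb)) (ψ := seqHom horb)
    (fun c => show seqShift (seqOfRat g α _) = seqOfRat g α _ by
      rw [seqOfRat_C, seqShift_seqConst]) (seqShift_seqOfRat_X horb) h

end OrbitEvaluation

theorem exists_fundamental_matrix_and_lin_diff_eqs_general
    {k : Type*} [Field k]
    (g : RatFunc k)
    (α : Option k)
    (horb : (Set.range fun n => (ratApply g)^[n] α).Infinite)
    (ℓ : ℕ) (A : Matrix (Fin ℓ) (Fin ℓ) (RatFunc k)) (hA : A.det ≠ 0) :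
    (∃ Y : Matrix (Fin ℓ) (Fin ℓ) (Seq k),
      IsUnit Y.det ∧
      (∀ i j, seqShift (Y i j) = ∑ m, seqOfRat g α (A i m) * Y m j) ∧
      (∀ i j, SatisfiesLinDiffEq g α (Y i j)) ∧
      (∀ a ∈ genRing g α Y, SatisfiesLinDiffEq g α a)) ∧
    (∀ V : Set (Seq k), (0 : Seq k) ∈ V →
      (∀ a ∈ V, ∀ b ∈ V, a + b ∈ V) →
      (∀ h : RatFunc k, ∀ a ∈ V, seqOfRat g α h * a ∈ V) →
      (∀ a ∈ V, seqShift a ∈ V) →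
      (∃ n : ℕ, ∃ bb : Fin n → Seq k, (∀ i, bb i ∈ V) ∧
        ∀ vv ∈ V, ∃ c : Fin n → RatFunc k, vv = ∑ i, seqOfRat g α (c i) * bb i) →
      ∀ a ∈ V, SatisfiesLinDiffEq g α a) := by
  let _ : Algebra (RatFunc k) (Seq k) := (seqHom horb).toAlgebra
  have hσ (c : RatFunc k) : seqShiftHom (algebraMap (RatFunc k) (Seq k) c) ∈
      (algebraMap (RatFunc k) (Seq k)).range := ⟨_, (seqShift_seqOfRat horb c).symm⟩
  have hlde (a) (ha : a ∈ finiteOrbitSubalgebra seqShiftHom hσ) : SatisfiesLinDiffEq g α a := by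
    obtain ⟨m, hm, c, hc⟩ := exists_linRecurrence_of_fg_orbitSpan ha
    simp only [seqShiftHom_pow_apply] at hc
    exact ⟨m, hm, c, hc⟩
  obtain ⟨Y, hYdet, hY⟩ := exists_fundamentalMatrix (A.map (seqOfRat g α))
    (RingHom.map_det (seqHom horb) A ▸ (isUnit_iff_ne_zero.mpr hA).map (seqHom horb))
  have hgen : genRing g α Y ≤ (finiteOrbitSubalgebra seqShiftHom hσ).toSubring := by
    refine Subring.closure_le.mpr ?_
    rintro x ((⟨h, rfl⟩ | ⟨i, j, rfl⟩) | hx)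
    · exact Subalgebra.algebraMap_mem _ h
    · exact entry_mem_finiteOrbitSubalgebra hσ hY i j
    · exact mem_finiteOrbitSubalgebra_of_det_mul_eq_one hσ hA hY hx
  refine ⟨⟨Y, hYdet, fun i j => congrFun (congrFun hY i) j,
    fun i j => hlde _ (entry_mem_finiteOrbitSubalgebra hσ hY i j),
    fun a ha => hlde a (hgen ha)⟩, ?_⟩
  rintro V - - - hVσ ⟨n, bb, -, hbb⟩ a ha
  refine hlde a <| (fg_span (finite_range bb)).of_le <|
    (orbitSpan_le_span (fun _ => hVσ _) ha).trans (span_le.mpr fun v hv => ?_)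
  obtain ⟨c, rfl⟩ := hbb v hv
  exact (mem_span_range_iff_exists_fun _).mpr ⟨c, rfl⟩

/-- **Appendix, auxiliary facts** (Wibmer). With `k` algebraically closed of
characteristic `0`, `g ∈ k(x)` of degree `≥ 2` and `α ∈ ℙ^1(k)` with infinite
`g`-orbit, for any `A ∈ GL_ℓ(k(x))` there exists a fundamental solution matrix
`Y ∈ GL_ℓ(Seq_k)` with `σ(Y) = A Y`; every entry of `Y` and every element of
`k(x)[Y_{ij}, 1/det Y]` satisfies a linear difference equation over `k(x)`; and more
generally every element of a finite-dimensional σ-stable `k(x)`-subspace of `Seq_k`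
satisfies a linear difference equation over `k(x)`. -/
theorem exists_fundamental_matrix_and_lin_diff_eqs
    {k : Type*} [Field k] [IsAlgClosed k] [CharZero k]
    (g : RatFunc k) (hg : 2 ≤ ratDegree g)
    (α : Option k)
    (horb : (Set.range fun n => (ratApply g)^[n] α).Infinite)
    (ℓ : ℕ) (A : Matrix (Fin ℓ) (Fin ℓ) (RatFunc k)) (hA : A.det ≠ 0) :
    (∃ Y : Matrix (Fin ℓ) (Fin ℓ) (Seq k),
      IsUnit Y.det ∧
      (∀ i j, seqShift (Y i j) = ∑ m, seqOfRat g α (A i m) * Y m j) ∧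
      (∀ i j, SatisfiesLinDiffEq g α (Y i j)) ∧
      (∀ a ∈ genRing g α Y, SatisfiesLinDiffEq g α a)) ∧
    (∀ V : Set (Seq k), (0 : Seq k) ∈ V →
      (∀ a ∈ V, ∀ b ∈ V, a + b ∈ V) →
      (∀ h : RatFunc k, ∀ a ∈ V, seqOfRat g α h * a ∈ V) →
      (∀ a ∈ V, seqShift a ∈ V) →
      (∃ n : ℕ, ∃ bb : Fin n → Seq k, (∀ i, bb i ∈ V) ∧
        ∀ vv ∈ V, ∃ c : Fin n → RatFunc k, vv = ∑ i, seqOfRat g α (c i) * bb i) →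
      ∀ a ∈ V, SatisfiesLinDiffEq g α a) :=
  exists_fundamental_matrix_and_lin_diff_eqs_general g α horb ℓ A hA
end DML
end
end
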